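/- Let E be a real inner product space, let 0 < m ≤ L, and let f : E → ℝ be differentiable with stationary point x⋆ (∇f(x⋆) = 0) such that for all x ∈ E, (L + m)·⟨x − x⋆, ∇f(x)⟩ ≥ m·L·‖x − x⋆‖² + ‖∇f(x)‖² (i.e. f ∈ S(m,L)). Let α satisfy 0 < α < 2/L and set r = max(|1 − α·m|, |1 − α·L|). Then r < 1, and if the sequence (x^k) satisfies x^{k+1} = x^k − α·∇f(x^k) for all k ≥ 0, then ‖x^k − x⋆‖ ≤ r^k·‖x^0 − x⋆‖ for all k, and x^k → x⋆ as k → ∞. -/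

import Mathlib

/-!
Write `e = x - x⋆` and `g = ∇f(x)`. The sector condition says exactly that `g` lies in the
closed ball of radius `(L - m)/2 · ‖e‖` around `(L + m)/2 · e`. Splitting the step as
`e - α g = (1 - α (L + m)/2) e - α (g - (L + m)/2 · e)` and using the triangle inequality
bounds `‖e - α g‖` by `(|1 - α (L + m)/2| + α (L - m)/2) ‖e‖ = max |1 - αm| |1 - αL| · ‖e‖`,
and this factor is `< 1` precisely when `0 < α < 2/L`.
-/

open RealInnerProductSpace Filter

theorem abs_add_eq_max_abs_add_abs_sub {α : Type*} [Field α] [LinearOrder α]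
    [IsStrictOrderedRing α] (a : α) {b : α} (hb : 0 ≤ b) :
    |a| + b = max |a + b| |a - b| := by
  rcases le_total 0 a with ha | ha
  · rw [abs_of_nonneg ha, abs_of_nonneg (add_nonneg ha hb), max_eq_left]
    exact abs_sub_le_iff.2 ⟨by linarith, by linarith⟩
  · rw [abs_of_nonpos ha, abs_of_nonpos (by linarith : a - b ≤ 0), max_eq_right]
    · abel
    · exact abs_le.2 ⟨by linarith, by linarith⟩

theorem max_abs_one_sub_mul_lt_one {m L α : ℝ} (hm : 0 < m) (hmL : m ≤ L) (hα : 0 < α)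
    (hαL : α * L < 2) : max |1 - α * m| |1 - α * L| < 1 := by
  have hαm : 0 < α * m := mul_pos hα hm
  have hαmL : α * m ≤ α * L := mul_le_mul_of_nonneg_left hmL hα.le
  apply max_lt <;> rw [abs_lt] <;> constructor <;> linarith

section Sector

variable {E : Type*} [NormedAddCommGroup E] [InnerProductSpace ℝ E]

theorem norm_sub_smul_le_of_sector {m L : ℝ} (hmL : m ≤ L) {e g : E}
    (h : (L + m) * ⟪e, g⟫ ≥ m * L * ‖e‖ ^ 2 + ‖g‖ ^ 2) :
    ‖g - ((L + m) / 2) • e‖ ≤ (L - m) / 2 * ‖e‖ := by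
  have hsq : ‖g - ((L + m) / 2) • e‖ ^ 2 ≤ ((L - m) / 2 * ‖e‖) ^ 2 := by
    rw [norm_sub_sq_real, norm_smul, real_inner_smul_right, real_inner_comm,
      Real.norm_eq_abs, mul_pow, sq_abs]
    nlinarith
  have hrad : 0 ≤ (L - m) / 2 * ‖e‖ := mul_nonneg (by linarith) (norm_nonneg e)
  exact (pow_le_pow_iff_left₀ (norm_nonneg _) hrad two_ne_zero).mp hsq

theorem norm_sub_smul_le_of_norm_sub_smul_le {c ρ α : ℝ} (hα : 0 ≤ α) {e g : E}
    (h : ‖g - c • e‖ ≤ ρ * ‖e‖) : ‖e - α • g‖ ≤ (|1 - α * c| + α * ρ) * ‖e‖ := by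
  have hsplit : e - α • g = (1 - α * c) • e - α • (g - c • e) := by
    simp only [smul_sub, sub_smul, one_smul, mul_smul]
    abel
  calc ‖e - α • g‖ ≤ ‖(1 - α * c) • e‖ + ‖α • (g - c • e)‖ := hsplit ▸ norm_sub_le _ _
    _ ≤ |1 - α * c| * ‖e‖ + α * (ρ * ‖e‖) := by
      rw [norm_smul, norm_smul, Real.norm_eq_abs, Real.norm_eq_abs, abs_of_nonneg hα]
      gcongr
    _ = (|1 - α * c| + α * ρ) * ‖e‖ := by ring

theorem norm_sub_smul_le_max_mul_of_sector {m L α : ℝ} (hmL : m ≤ L) (hα : 0 ≤ α) {e g : E}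
    (h : (L + m) * ⟪e, g⟫ ≥ m * L * ‖e‖ ^ 2 + ‖g‖ ^ 2) :
    ‖e - α • g‖ ≤ max |1 - α * m| |1 - α * L| * ‖e‖ := by
  have hb : 0 ≤ α * ((L - m) / 2) := mul_nonneg hα (by linarith)
  calc ‖e - α • g‖ ≤ (|1 - α * ((L + m) / 2)| + α * ((L - m) / 2)) * ‖e‖ :=
        norm_sub_smul_le_of_norm_sub_smul_le hα (norm_sub_smul_le_of_sector hmL h)
    _ = max |1 - α * m| |1 - α * L| * ‖e‖ := by
      rw [abs_add_eq_max_abs_add_abs_sub _ hb]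
      congr 3 <;> ring

end Sector

theorem gradient_descent_linear_convergence_general
    {E : Type*} [NormedAddCommGroup E] [InnerProductSpace ℝ E]
    (m L : ℝ) (hm : 0 < m) (hmL : m ≤ L)
    (f' : E → E)
    (xstar : E)
    (hsector : ∀ x : E,
      (L + m) * ⟪x - xstar, f' x⟫ ≥ m * L * ‖x - xstar‖ ^ 2 + ‖f' x‖ ^ 2)
    (α : ℝ) (hα : 0 < α) (hα2 : α < 2 / L)
    (r : ℝ) (hr : r = max |1 - α * m| |1 - α * L|)
    (x : ℕ → E) (hiter : ∀ k : ℕ, x (k + 1) = x k - α • f' (x k)) :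
    r < 1 ∧ (∀ k : ℕ, ‖x k - xstar‖ ≤ r ^ k * ‖x 0 - xstar‖) ∧
      Tendsto x atTop (nhds xstar) := by
  have hαL : α * L < 2 := (lt_div_iff₀ (hm.trans_le hmL)).mp hα2
  have hr0 : 0 ≤ r := hr ▸ (abs_nonneg _).trans (le_max_left _ _)
  have hr1 : r < 1 := hr ▸ max_abs_one_sub_mul_lt_one hm hmL hα hαL
  have hstep (k : ℕ) : ‖x (k + 1) - xstar‖ ≤ r * ‖x k - xstar‖ := by
    rw [hiter, sub_right_comm, hr]
    exact norm_sub_smul_le_max_mul_of_sector hmL hα.le (hsector (x k))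
  have hbound (k : ℕ) : ‖x k - xstar‖ ≤ r ^ k * ‖x 0 - xstar‖ :=
    le_geom (u := fun k => ‖x k - xstar‖) hr0 k fun j _ => hstep j
  refine ⟨hr1, hbound, tendsto_iff_norm_sub_tendsto_zero.mpr ?_⟩
  have hgeom := (tendsto_pow_atTop_nhds_zero_of_lt_one hr0 hr1).mul_const ‖x 0 - xstar‖
  rw [zero_mul] at hgeom
  exact squeeze_zero (fun k => norm_nonneg _) hbound hgeom

/-- For `f ∈ S(m,L)` with stationary point `x⋆` and any stepsize `0 < α < 2/L`,
the contraction factor `r = max |1 − αm| |1 − αL|` satisfies `r < 1`, gradient descent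
satisfies `‖x^k − x⋆‖ ≤ r^k ‖x^0 − x⋆‖`, and `x^k → x⋆`. -/
theorem gradient_descent_linear_convergence
    {E : Type*} [NormedAddCommGroup E] [InnerProductSpace ℝ E] [CompleteSpace E]
    (m L : ℝ) (hm : 0 < m) (hmL : m ≤ L)
    (f : E → ℝ) (f' : E → E) (hf : ∀ x, HasGradientAt f (f' x) x)
    (xstar : E) (hstar : f' xstar = 0)
    (hsector : ∀ x : E,
      (L + m) * ⟪x - xstar, f' x⟫ ≥ m * L * ‖x - xstar‖ ^ 2 + ‖f' x‖ ^ 2)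
    (α : ℝ) (hα : 0 < α) (hα2 : α < 2 / L)
    (r : ℝ) (hr : r = max |1 - α * m| |1 - α * L|)
    (x : ℕ → E) (hiter : ∀ k : ℕ, x (k + 1) = x k - α • f' (x k)) :
    r < 1 ∧ (∀ k : ℕ, ‖x k - xstar‖ ≤ r ^ k * ‖x 0 - xstar‖) ∧
      Tendsto x atTop (nhds xstar) :=
  gradient_descent_linear_convergence_general m L hm hmL f' xstar hsector α hα hα2 r hr x hiter
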